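/- arXiv:2401.17235 — 4 statements merged into one kernel-verified Lean document; each statement's English description precedes it below -/
import Mathlib

section
/- Let A_1, ..., A_k be a partition of [n]. Then for every pair of permutations π, π' of [n], the Ulam distance d_U(π,π') is at least the sum over i of d_U(π|_{A_i}, π'|_{A_i}). -/
/-!
Fix a longest common subsequence `L` of `π` and `π'`. For each block `A`, the restriction
`L|_A` is a common subsequence of `π|_A` and `π'|_A`, so `d_U(π|_A, π'|_A) ≤ #(A \ L)`.
Since `L` has no repeated symbols, these bounds add up over the partition to
`#([n] \ L) = n - |L| = d_U(π, π')`.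
-/

open Finset Function

/-- Length of a longest common subsequence of two lists. -/
def lcsLen (x y : List ℕ) : ℕ :=
  ((x.sublists.filter (fun s => decide (s.Sublist y))).map List.length).foldr max 0

theorem List.foldr_max_zero_mem {l : List ℕ} (hl : l ≠ []) : l.foldr max 0 ∈ l :=
  List.maximum_mem (List.foldr_max_of_ne_nil hl).symm

theorem length_le_lcsLen {x y L : List ℕ} (hx : L.Sublist x) (hy : L.Sublist y) :
    L.length ≤ lcsLen x y :=
  List.le_max_of_le' 0 (x := L.length) (by simpa using ⟨L, ⟨hx, hy⟩, rfl⟩) le_rfl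

theorem exists_sublist_length_eq_lcsLen (x y : List ℕ) :
    ∃ L : List ℕ, L.Sublist x ∧ L.Sublist y ∧ L.length = lcsLen x y := by
  have hne : (x.sublists.filter (fun s => decide (s.Sublist y))).map List.length ≠ [] := by
    simpa using ⟨[], List.nil_sublist x, List.nil_sublist y⟩
  simpa [lcsLen, and_assoc] using List.foldr_max_zero_mem hne

theorem card_sdiff_toFinset {α : Type*} [DecidableEq α] {L : List α} (hL : L.Nodup)
    (A : Finset α) : #(A \ L.toFinset) = #A - (L.filter (· ∈ A)).length := by
  rw [card_sdiff, ← List.toFinset_card_of_nodup (hL.filter _)]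
  congr 2
  ext a
  simp

theorem sum_card_sdiff_of_pairwise_disjoint {ι α : Type*} [Fintype ι] [DecidableEq α]
    {A : ι → Finset α} (hA : Pairwise (Disjoint on A)) (S : Finset α) :
    ∑ i, #(A i \ S) = #(univ.biUnion A \ S) := by
  have hunion : univ.biUnion A \ S = univ.biUnion (fun i => A i \ S) := by
    ext a
    simp [and_comm]
  rw [hunion, card_biUnion]
  exact fun i _ j _ hij => (hA hij).mono sdiff_le sdiff_le

theorem ulam_ge_sum_of_partition_general (n k : ℕ) (A : Fin k → Finset ℕ)
    (hdisj : ∀ i j, i ≠ j → Disjoint (A i) (A j))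
    (hcover : Finset.univ.biUnion A = Finset.range n)
    (π π' : List ℕ) (hπ : π.Perm (List.range n)) :
    ∑ i : Fin k,
        ((A i).card -
          lcsLen (π.filter (fun a => decide (a ∈ A i))) (π'.filter (fun a => decide (a ∈ A i))))
      ≤ n - lcsLen π π' := by
  obtain ⟨L, hLπ, hLπ', hLlen⟩ := exists_sublist_length_eq_lcsLen π π'
  have hL : L.Nodup := hLπ.nodup (hπ.nodup_iff.mpr List.nodup_range)
  have hLrange : L.toFinset ⊆ range n := fun a ha => by
    simpa using hπ.subset (hLπ.subset (List.mem_toFinset.mp ha))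
  calc ∑ i : Fin k, (#(A i) - lcsLen (π.filter (· ∈ A i)) (π'.filter (· ∈ A i)))
      ≤ ∑ i : Fin k, (#(A i) - (L.filter (· ∈ A i)).length) :=
        sum_le_sum fun i _ =>
          Nat.sub_le_sub_left (length_le_lcsLen (hLπ.filter _) (hLπ'.filter _)) _
    _ = ∑ i : Fin k, #(A i \ L.toFinset) := by simp only [card_sdiff_toFinset hL]
    _ = #(range n \ L.toFinset) := by rw [sum_card_sdiff_of_pairwise_disjoint hdisj, hcover]
    _ = n - lcsLen π π' := by
        rw [card_sdiff_of_subset hLrange, card_range, List.toFinset_card_of_nodup hL, hLlen]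

/-- Superadditivity of the Ulam distance over a partition of the symbol set:
if `A 0, …, A (k-1)` partition `[n]`, then
`d_U(π, π') ≥ Σᵢ d_U(π|_{Aᵢ}, π'|_{Aᵢ})`, where the Ulam distance of two sequences on
a symbol set of size `m` is `m` minus their longest common subsequence length. -/
theorem ulam_ge_sum_of_partition (n k : ℕ) (A : Fin k → Finset ℕ)
    (hdisj : ∀ i j, i ≠ j → Disjoint (A i) (A j))
    (hcover : Finset.univ.biUnion A = Finset.range n)
    (π π' : List ℕ) (hπ : π.Perm (List.range n)) (hπ' : π'.Perm (List.range n)) :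
    ∑ i : Fin k,
        ((A i).card -
          lcsLen (π.filter (fun a => decide (a ∈ A i))) (π'.filter (fun a => decide (a ∈ A i))))
      ≤ n - lcsLen π π' :=
  ulam_ge_sum_of_partition_general n k A hdisj hcover π π' hπ
end

section
/- Let q = 2^t, and let g, g' ∈ {0,1}^t have Hamming distance at least (1−δ)·t for some δ ∈ (0,1). Define permutations σ_g and σ_{g'} of [q] by σ_h(i) = the unique x with i = x XOR h (equivalently σ_h sends position i to symbol i XOR h). Then the length of the longest common subsequence of σ_g and σ_{g'} (viewed as length-q sequences) is at most q^δ = 2^{δt}. -/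
/-- The permutation `σ_g` of `[2^t]`, `i ↦ i XOR g`, viewed as a length-`2^t` sequence. -/
def sigmaList (t g : ℕ) : List ℕ := (List.range (2 ^ t)).map (fun i => i ^^^ g)

open Finset

lemma lcsLen_le {x y : List ℕ} {k : ℕ}
    (h : ∀ s : List ℕ, s.Sublist x → s.Sublist y → s.length ≤ k) : lcsLen x y ≤ k :=
  List.max_le_of_forall_le _ k <| by
    simp only [List.mem_map, List.mem_filter, List.mem_sublists, decide_eq_true_eq]
    rintro _ ⟨s, ⟨hsx, hsy⟩, rfl⟩
    exact h s hsx hsy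

lemma map_xor_sublist_range_of_sublist_sigmaList {t h : ℕ} {s : List ℕ}
    (hs : s.Sublist (sigmaList t h)) : (s.map (· ^^^ h)).Sublist (List.range (2 ^ t)) := by
  simpa [sigmaList, List.map_map, Function.comp_def] using hs.map (· ^^^ h)

namespace Nat

lemma testBit_eq_of_lt_of_msb_xor {a b k : ℕ} (hab : a < b) (hk : (a ^^^ b).testBit k = true)
    (hhigh : ∀ j, k < j → (a ^^^ b).testBit j = false) :
    a.testBit k = false ∧ b.testBit k = true := by
  have hagree : ∀ j, k < j → b.testBit j = a.testBit j := fun j hj =>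
    (by simpa [testBit_xor, bne_eq_false_iff_eq] using hhigh j hj : a.testBit j = b.testBit j).symm
  rcases ha : a.testBit k with _ | _ <;> rcases hb : b.testBit k with _ | _
  · simp [testBit_xor, ha, hb] at hk
  · exact ⟨rfl, rfl⟩
  · exact absurd (lt_of_testBit k hb ha hagree) hab.not_gt
  · simp [testBit_xor, ha, hb] at hk

lemma ldiff_lt_ldiff_of_lt_of_xor_lt {i i' d : ℕ} (h : i < i') (hd : i ^^^ d < i' ^^^ d) :
    ldiff i d < ldiff i' d := by
  obtain ⟨k, hk, hhigh⟩ := exists_most_significant_bit (xor_ne_zero_iff.mpr h.ne)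
  have hxor : (i ^^^ d) ^^^ (i' ^^^ d) = i ^^^ i' := by
    rw [xor_comm i' d, ← xor_assoc, xor_cancel_right]
  obtain ⟨hi, hi'⟩ := testBit_eq_of_lt_of_msb_xor h hk hhigh
  obtain ⟨hid, -⟩ := testBit_eq_of_lt_of_msb_xor hd (hxor ▸ hk) (hxor ▸ hhigh)
  have hdk : d.testBit k = false := by simpa [testBit_xor, hi] using hid
  refine lt_of_testBit k (by simp [testBit_ldiff, hi]) (by simp [testBit_ldiff, hi', hdk])
    fun j hj => ?_
  have hij : i.testBit j = i'.testBit j := by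
    simpa [testBit_xor, bne_eq_false_iff_eq] using hhigh j hj
  simp [testBit_ldiff, hij]

end Nat

lemma card_le_two_pow_of_testBit_mem {s Z : Finset ℕ} (h : ∀ x ∈ s, ∀ i, x.testBit i → i ∈ Z) :
    #s ≤ 2 ^ #Z := by
  rw [← card_powerset]
  refine card_le_card_of_injOn equivBitIndices (fun x hx => ?_) equivBitIndices.injective.injOn
  rw [mem_coe, mem_powerset]
  intro i hi
  exact h x hx i (by simpa [equivBitIndices] using hi)

theorem lcsLen_sigmaList_le (t g g' : ℕ) :
    lcsLen (sigmaList t g) (sigmaList t g') ≤ 2 ^ #{i ∈ range t | g.testBit i = g'.testBit i} := by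
  refine lcsLen_le fun s hs hs' => ?_
  set d := g ^^^ g'
  have hpos := map_xor_sublist_range_of_sublist_sigmaList hs
  have hpos' := map_xor_sublist_range_of_sublist_sigmaList hs'
  have hshift : ∀ a, a ^^^ g' = (a ^^^ g) ^^^ d := fun a => by
    rw [Nat.xor_assoc, ← Nat.xor_assoc g, Nat.xor_self, Nat.zero_xor]
  let F a := Nat.ldiff (a ^^^ g) d
  have hF : (s.map F).Pairwise (· < ·) := by
    have hlt := List.pairwise_map.mp (List.pairwise_lt_range.sublist hpos)
    have hlt' := List.pairwise_map.mp (List.pairwise_lt_range.sublist hpos')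
    refine List.pairwise_map.mpr ((hlt.and hlt').imp fun ⟨hab, hab'⟩ => ?_)
    rw [hshift, hshift] at hab'
    exact Nat.ldiff_lt_ldiff_of_lt_of_xor_lt hab hab'
  calc s.length = #(s.map F).toFinset := by
        rw [List.toFinset_card_of_nodup hF.nodup, List.length_map]
    _ ≤ _ := card_le_two_pow_of_testBit_mem fun x hx i hi => ?_
  obtain ⟨a, ha, rfl⟩ := List.mem_map.mp (List.mem_toFinset.mp hx)
  have hlt : a ^^^ g < 2 ^ t := List.mem_range.mp (hpos.subset (List.mem_map_of_mem ha))
  simp only [Nat.testBit_ldiff, Bool.and_eq_true, Bool.not_eq_true', F] at hi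
  refine mem_filter.mpr ⟨mem_range.mpr ?_, ?_⟩
  · exact (Nat.pow_lt_pow_iff_right one_lt_two).mp ((Nat.ge_two_pow_of_testBit hi.1).trans_lt hlt)
  · simpa [d, Nat.testBit_xor] using hi.2

theorem lcs_xor_perms_le_general (t g g' : ℕ) (δ : ℝ)
    (hdist : (1 - δ) * t ≤
      ((Finset.range t).filter (fun i => g.testBit i ≠ g'.testBit i)).card) :
    (lcsLen (sigmaList t g) (sigmaList t g') : ℝ) ≤ (2 : ℝ) ^ (δ * t) := by
  have hsplit : (#{i ∈ range t | g.testBit i = g'.testBit i} : ℝ)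
      + #{i ∈ range t | g.testBit i ≠ g'.testBit i} = t := by
    exact_mod_cast (card_filter_add_card_filter_not _).trans (card_range t)
  calc (lcsLen (sigmaList t g) (sigmaList t g') : ℝ)
      ≤ (2 : ℝ) ^ #{i ∈ range t | g.testBit i = g'.testBit i} := by
        exact_mod_cast lcsLen_sigmaList_le t g g'
    _ = (2 : ℝ) ^ (#{i ∈ range t | g.testBit i = g'.testBit i} : ℝ) := (Real.rpow_natCast _ _).symm
    _ ≤ (2 : ℝ) ^ (δ * t) := Real.rpow_le_rpow_of_exponent_le one_le_two (by linarith)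

/-- If `g, g' ∈ {0,1}^t` have Hamming distance at least `(1-δ)·t`, then the longest common
subsequence of the permutations `σ_g` and `σ_{g'}` of `[q]`, `q = 2^t`, has length at most
`q^δ = 2^{δt}`. -/
theorem lcs_xor_perms_le (t g g' : ℕ) (δ : ℝ) (hδ : δ ∈ Set.Ioo (0 : ℝ) 1)
    (hg : g < 2 ^ t) (hg' : g' < 2 ^ t)
    (hdist : (1 - δ) * t ≤
      ((Finset.range t).filter (fun i => g.testBit i ≠ g'.testBit i)).card) :
    (lcsLen (sigmaList t g) (sigmaList t g') : ℝ) ≤ (2 : ℝ) ^ (δ * t) :=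
  lcs_xor_perms_le_general t g g' δ hdist
end

section
/- Let q = 2^t, and let G ⊆ {0,1}^t be a binary code of size at least 2^{εt} with pairwise relative Hamming distance at least (1−δ). Then D = {σ_g : g ∈ G}, where σ_g(i) = i XOR g, is a set of at least q^ε permutations of [q] such that every two distinct members have longest common subsequence of length at most q^δ, i.e., pairwise Ulam distance at least q − q^δ. -/
/-!
`σ_g` lists `[2^t]` in increasing order of `x ↦ x ^^^ g`, so a common subsequence of `σ_g` and
`σ_{g'}` is increasing for both masks. Whether `a ^^^ g < b ^^^ g` is decided by the top bit `k`
at which `a` and `b` differ: it holds iff `a` and `g` agree at `k`. Hence two entries of a common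
subsequence always differ at a position where `g` and `g'` agree, so the subsequence injects into
the subsets of these at most `δ t` positions and has length at most `2^(δ t) = q^δ`.
-/

open Finset

namespace Nat

theorem testBit_eq_of_xor_lt_xor {a b g k : ℕ} (hk : (a ^^^ b).testBit k = true)
    (hhigh : ∀ j, k < j → (a ^^^ b).testBit j = false) (hlt : a ^^^ g < b ^^^ g) :
    a.testBit k = g.testBit k := by
  by_contra hne
  rw [testBit_xor] at hk
  refine hlt.not_gt (lt_of_testBit k ?_ ?_ fun j hj => ?_)
  · rw [testBit_xor]
    revert hk hne; cases a.testBit k <;> cases b.testBit k <;> cases g.testBit k <;> simp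
  · rw [testBit_xor]
    revert hne; cases a.testBit k <;> cases g.testBit k <;> simp
  · have := hhigh j hj
    simp only [testBit_xor, bne_eq_false_iff_eq] at this ⊢
    rw [this]

theorem exists_testBit_ne_of_xor_lt_xor {t a b g g' : ℕ} (hab : a ≠ b) (hlt : a ^^^ b < 2 ^ t)
    (h : a ^^^ g < b ^^^ g) (h' : a ^^^ g' < b ^^^ g') :
    ∃ k < t, a.testBit k ≠ b.testBit k ∧ g.testBit k = g'.testBit k := by
  obtain ⟨k, hk, hhigh⟩ := exists_most_significant_bit (xor_ne_zero_iff.mpr hab)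
  refine ⟨k, (Nat.pow_lt_pow_iff_right one_lt_two).mp
    ((ge_two_pow_of_testBit hk).trans_lt hlt), ?_, ?_⟩
  · simpa [testBit_xor] using hk
  · rw [← testBit_eq_of_xor_lt_xor hk hhigh h, testBit_eq_of_xor_lt_xor hk hhigh h']

end Nat

theorem sigmaList_perm_range {t g : ℕ} (hg : g < 2 ^ t) :
    (sigmaList t g).Perm (List.range (2 ^ t)) := by
  have hinj : Function.Injective (fun i : ℕ => i ^^^ g) := fun i j h => by
    simpa using congrArg (· ^^^ g) h
  refine (List.perm_ext_iff_of_nodup (List.nodup_range.map hinj) List.nodup_range).mpr fun a => ?_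
  simp only [List.mem_map, List.mem_range]
  exact ⟨fun ⟨i, hi, hia⟩ => hia ▸ Nat.xor_lt_two_pow hi hg,
    fun ha => ⟨a ^^^ g, Nat.xor_lt_two_pow ha hg, by simp⟩⟩

theorem sigmaList_injective (t : ℕ) : Function.Injective (sigmaList t) := by
  intro g g' h
  have h0 := congrArg (·[0]?) h
  simpa [sigmaList] using h0

theorem xor_lt_two_pow_of_mem_sigmaList {t g a : ℕ} (ha : a ∈ sigmaList t g) :
    a ^^^ g < 2 ^ t := by
  obtain ⟨i, hi, rfl⟩ := List.mem_map.mp ha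
  simpa using List.mem_range.mp hi

theorem List.Sublist.pairwise_xor_lt_of_sigmaList {t g : ℕ} {s : List ℕ}
    (hs : s.Sublist (sigmaList t g)) : s.Pairwise (fun a b => a ^^^ g < b ^^^ g) := by
  refine List.Pairwise.sublist hs ?_
  rw [sigmaList, List.pairwise_map]
  exact List.pairwise_lt_range.imp fun hij => by simpa using hij

theorem length_le_of_sublist_sigmaList {t g g' : ℕ} {s : List ℕ}
    (hs : s.Sublist (sigmaList t g)) (hs' : s.Sublist (sigmaList t g')) :
    s.length ≤ 2 ^ #{i ∈ range t | g.testBit i = g'.testBit i} := by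
  set Z := {i ∈ range t | g.testBit i = g'.testBit i}
  set π : ℕ → Finset ℕ := fun a => {i ∈ Z | a.testBit i}
  have hnodup : (s.map π).Nodup := by
    refine List.pairwise_map.mpr ((hs.pairwise_xor_lt_of_sigmaList.and
      hs'.pairwise_xor_lt_of_sigmaList).imp_of_mem @fun a b ha hb ⟨h, h'⟩ hπ => ?_)
    have hab : a ≠ b := fun hab => by subst hab; exact lt_irrefl _ h
    have hlt := Nat.xor_lt_two_pow (xor_lt_two_pow_of_mem_sigmaList (hs.subset ha))
      (xor_lt_two_pow_of_mem_sigmaList (hs.subset hb))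
    rw [Nat.xor_comm b, Nat.xor_assoc, Nat.xor_xor_cancel_left] at hlt
    obtain ⟨k, hkt, hk, hgk⟩ := Nat.exists_testBit_ne_of_xor_lt_xor hab hlt h h'
    have hkZ : k ∈ Z := mem_filter.mpr ⟨mem_range.mpr hkt, hgk⟩
    have := congrArg (k ∈ ·) hπ
    simp only [π, mem_filter, hkZ, true_and, eq_iff_iff] at this
    exact hk (Bool.eq_iff_iff.mpr this)
  calc s.length = #(s.map π).toFinset := by rw [List.toFinset_card_of_nodup hnodup, List.length_map]
    _ ≤ #Z.powerset := card_le_card fun x hx => by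
        obtain ⟨a, -, rfl⟩ := List.mem_map.mp (List.mem_toFinset.mp hx)
        exact mem_powerset.mpr (filter_subset _ _)
    _ = 2 ^ #Z := card_powerset Z

theorem lcsLen_le_of_forall_sublist {x y : List ℕ} {b : ℕ}
    (h : ∀ s : List ℕ, s.Sublist x → s.Sublist y → s.length ≤ b) : lcsLen x y ≤ b := by
  refine List.max_le_of_forall_le _ _ fun n hn => ?_
  obtain ⟨s, hs, rfl⟩ := List.mem_map.mp hn
  rw [List.mem_filter, List.mem_sublists, decide_eq_true_iff] at hs
  exact h s hs.1 hs.2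

theorem two_pow_card_filter_le_rpow {t : ℕ} {δ : ℝ} (p : ℕ → Prop) [DecidablePred p]
    (h : (1 - δ) * t ≤ #{i ∈ range t | ¬p i}) :
    (2 : ℝ) ^ #{i ∈ range t | p i} ≤ ((2 : ℝ) ^ t) ^ δ := by
  have hsplit : (#{i ∈ range t | p i} : ℝ) + #{i ∈ range t | ¬p i} = t := by
    exact_mod_cast (card_range t ▸ card_filter_add_card_filter_not p)
  rw [← Real.rpow_natCast, ← Real.rpow_natCast, ← Real.rpow_mul zero_le_two]
  exact Real.rpow_le_rpow_of_exponent_le one_le_two (by linarith)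

theorem ground_set_construction_general (t : ℕ) (ε δ : ℝ)
    (G : Finset ℕ) (hG : ∀ g ∈ G, g < 2 ^ t)
    (hsize : (2 : ℝ) ^ (ε * t) ≤ G.card)
    (hrel : ∀ g ∈ G, ∀ g' ∈ G, g ≠ g' →
      (1 - δ) * t ≤ ((Finset.range t).filter (fun i => g.testBit i ≠ g'.testBit i)).card) :
    (∀ g ∈ G, (sigmaList t g).Perm (List.range (2 ^ t))) ∧
    (((2 : ℝ) ^ t) ^ ε ≤ (G.image (fun g => sigmaList t g)).card) ∧
    (∀ g ∈ G, ∀ g' ∈ G, g ≠ g' →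
      (lcsLen (sigmaList t g) (sigmaList t g') : ℝ) ≤ ((2 : ℝ) ^ t) ^ δ) := by
  refine ⟨fun g hg => sigmaList_perm_range (hG g hg), ?_, fun g hg g' hg' hne => ?_⟩
  · rw [card_image_of_injective _ (sigmaList_injective t), ← Real.rpow_natCast,
      ← Real.rpow_mul zero_le_two, mul_comm]
    exact hsize
  · calc (lcsLen (sigmaList t g) (sigmaList t g') : ℝ)
        ≤ (2 : ℝ) ^ #{i ∈ range t | g.testBit i = g'.testBit i} := by
          exact_mod_cast lcsLen_sigmaList_le t g g'
      _ ≤ ((2 : ℝ) ^ t) ^ δ := two_pow_card_filter_le_rpow _ (hrel g hg g' hg' hne)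

/-- Explicit ground permutation set: if `G ⊆ {0,1}^t` is a binary code of size at least
`2^{εt}` with pairwise relative Hamming distance at least `1-δ`, then
`D = {σ_g : g ∈ G}` is a set of at least `q^ε` permutations of `[q]` (`q = 2^t`) such that
every two distinct members have LCS at most `q^δ`, i.e. pairwise Ulam distance at least
`q - q^δ`. -/
theorem ground_set_construction (t : ℕ) (ε δ : ℝ)
    (hε : ε ∈ Set.Ioo (0 : ℝ) 1) (hδ : δ ∈ Set.Ioo (0 : ℝ) 1)
    (G : Finset ℕ) (hG : ∀ g ∈ G, g < 2 ^ t)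
    (hsize : (2 : ℝ) ^ (ε * t) ≤ G.card)
    (hrel : ∀ g ∈ G, ∀ g' ∈ G, g ≠ g' →
      (1 - δ) * t ≤ ((Finset.range t).filter (fun i => g.testBit i ≠ g'.testBit i)).card) :
    (∀ g ∈ G, (sigmaList t g).Perm (List.range (2 ^ t))) ∧
    (((2 : ℝ) ^ t) ^ ε ≤ (G.image (fun g => sigmaList t g)).card) ∧
    (∀ g ∈ G, ∀ g' ∈ G, g ≠ g' →
      (lcsLen (sigmaList t g) (sigmaList t g') : ℝ) ≤ ((2 : ℝ) ^ t) ^ δ) :=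
  ground_set_construction_general t ε δ G hG hsize hrel
end

section
/- Restriction invariance under later-stage shuffles: let n = q^ℓ, and fix a stage j ∈ {1,...,ℓ}. Suppose π^{(k)} is obtained from π^{(j)} by a sequence of operations (stages j+1,...,k), each of which permutes, for each choice of prefix α ∈ [q]^{i−1} and suffix β ∈ [q]^{ℓ−i} with i > j, only the symbols at positions {αxβ : x ∈ [q]} among themselves. Then for any fixed (α, β) ∈ [q]^{j−1} × [q]^{ℓ−j}, the relative order of the symbols occupying positions {αxβ : x ∈ [q]} at stage j is preserved: π^{(k)}|_A is order-isomorphic to π^{(j)}|_A where A is the set of symbols at those positions in π^{(j)}. -/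
/-!
A stage-`i` operation preserves the quotient by `q^(ℓ-i+1)`; for `j < i ≤ ℓ` this power
divides `q^(ℓ-j)`, so every later-stage operation, hence their composite, preserves the
quotient by `q^(ℓ-j)`. Two distinct positions of one stage-`j` group have equal remainders
mod `q^(ℓ-j)`, so their quotients differ and alone decide their order; those quotients are
carried over unchanged to the positions the composite sends onto them.
-/

open Set

theorem List.foldr_comp_mapsTo_eqOn {α β : Type*} {s : Set α} {f : α → β}
    {L : List (α → α)} (h : ∀ ρ ∈ L, MapsTo ρ s s ∧ EqOn (f ∘ ρ) f s) :
    MapsTo (L.foldr (· ∘ ·) id) s s ∧ EqOn (f ∘ L.foldr (· ∘ ·) id) f s := by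
  induction L with
  | nil => exact ⟨mapsTo_id s, fun _ _ => rfl⟩
  | cons ρ L ih =>
    obtain ⟨hmaps, heq⟩ := ih fun σ hσ => h σ (List.mem_cons_of_mem ρ hσ)
    obtain ⟨hρmaps, hρeq⟩ := h ρ List.mem_cons_self
    exact ⟨hρmaps.comp hmaps, fun x hx => (hρeq (hmaps hx)).trans (heq hx)⟩

namespace Nat

theorem div_eq_div_of_dvd_of_div_eq {d e x y : ℕ} (hde : d ∣ e) (h : x / d = y / d) :
    x / e = y / e := by
  obtain ⟨c, rfl⟩ := hde
  rw [← Nat.div_div_eq_div_mul, ← Nat.div_div_eq_div_mul, h]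

theorem div_ne_div_of_mod_eq {d x y : ℕ} (hmod : x % d = y % d) (hne : x ≠ y) :
    x / d ≠ y / d :=
  fun hdiv => hne (Nat.ext_div_mod hdiv hmod)

theorem lt_iff_div_lt_div_of_div_ne {d x y : ℕ} (h : x / d ≠ y / d) :
    x < y ↔ x / d < y / d :=
  ⟨fun hxy => (Nat.div_le_div_right hxy.le).lt_of_ne h, Nat.lt_of_div_lt_div⟩

end Nat

theorem restriction_invariance_general (q ℓ j k n : ℕ)
    (hk : k ≤ ℓ)
    (ρs : List (ℕ → ℕ))
    (hstages : ∀ ρ ∈ ρs, ∃ i, j < i ∧ i ≤ k ∧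
      Set.BijOn ρ (Set.Iio n) (Set.Iio n) ∧
      ∀ m < n, ρ m / q ^ (ℓ - i + 1) = m / q ^ (ℓ - i + 1) ∧
        ρ m % q ^ (ℓ - i) = m % q ^ (ℓ - i)) :
    ∀ m m' p p' : ℕ, m < n → m' < n → p < n → p' < n →
      m / q ^ (ℓ - j + 1) = m' / q ^ (ℓ - j + 1) →
      m % q ^ (ℓ - j) = m' % q ^ (ℓ - j) →
      m ≠ m' →
      (ρs.foldr (· ∘ ·) id) p = m → (ρs.foldr (· ∘ ·) id) p' = m' →
      (p < p' ↔ m < m') := by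
  intro m m' p p' _ _ hp hp' _ hmod hne hpm hpm'
  have hcoarse : EqOn ((· / q ^ (ℓ - j)) ∘ ρs.foldr (· ∘ ·) id) (· / q ^ (ℓ - j)) (Iio n) := by
    refine (List.foldr_comp_mapsTo_eqOn fun ρ hρ => ?_).2
    obtain ⟨i, hji, hik, hbij, hpres⟩ := hstages ρ hρ
    exact ⟨hbij.mapsTo, fun x hx =>
      Nat.div_eq_div_of_dvd_of_div_eq (pow_dvd_pow q (by omega)) (hpres x hx).1⟩
  have hp_div : p / q ^ (ℓ - j) = m / q ^ (ℓ - j) := hpm ▸ (hcoarse hp).symm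
  have hp'_div : p' / q ^ (ℓ - j) = m' / q ^ (ℓ - j) := hpm' ▸ (hcoarse hp').symm
  have hm_div : m / q ^ (ℓ - j) ≠ m' / q ^ (ℓ - j) := Nat.div_ne_div_of_mod_eq hmod hne
  rw [Nat.lt_iff_div_lt_div_of_div_ne hm_div,
    Nat.lt_iff_div_lt_div_of_div_ne (hp_div ▸ hp'_div ▸ hm_div), hp_div, hp'_div]

/-- Restriction invariance under later-stage shuffles. Positions in `[n]`, `n = q^ℓ`, are
identified with their base-`q` representations in `[q]^ℓ` (most significant digit first).
A stage-`i` operation is a bijection `ρ` of positions that, for each prefix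
`α ∈ [q]^{i-1}` and suffix `β ∈ [q]^{ℓ-i}`, permutes only the positions
`{αxβ : x ∈ [q]}` among themselves; numerically this means `ρ` preserves both the quotient
by `q^{ℓ-i+1}` (the prefix `α`) and the remainder modulo `q^{ℓ-i}` (the suffix `β`).
If `πk` is obtained from `πj` by composing such operations for stages `i` with
`j < i ≤ k`, then for each `(α, β) ∈ [q]^{j-1} × [q]^{ℓ-j}` the relative order of the
symbols occupying the positions `{αxβ : x ∈ [q]}` at stage `j` is preserved: whenever
positions `m ≠ m'` lie in such a group (same quotient by `q^{ℓ-j+1}` and same remainder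
mod `q^{ℓ-j}`) and `p, p'` are the positions in `πk` holding the stage-`j` symbols
`πj m, πj m'` (i.e. `ρ p = m`, `ρ p' = m'` for the composite `ρ`), then
`p < p' ↔ m < m'`. -/
theorem restriction_invariance (q ℓ j k n : ℕ) (hn : n = q ^ ℓ)
    (hj : 1 ≤ j) (hjk : j ≤ k) (hk : k ≤ ℓ)
    (πj πk : ℕ → ℕ) (ρs : List (ℕ → ℕ))
    (hstages : ∀ ρ ∈ ρs, ∃ i, j < i ∧ i ≤ k ∧
      Set.BijOn ρ (Set.Iio n) (Set.Iio n) ∧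
      ∀ m < n, ρ m / q ^ (ℓ - i + 1) = m / q ^ (ℓ - i + 1) ∧
        ρ m % q ^ (ℓ - i) = m % q ^ (ℓ - i))
    (hcomp : ∀ m < n, πk m = πj ((ρs.foldr (· ∘ ·) id) m)) :
    ∀ m m' p p' : ℕ, m < n → m' < n → p < n → p' < n →
      m / q ^ (ℓ - j + 1) = m' / q ^ (ℓ - j + 1) →
      m % q ^ (ℓ - j) = m' % q ^ (ℓ - j) →
      m ≠ m' →
      (ρs.foldr (· ∘ ·) id) p = m → (ρs.foldr (· ∘ ·) id) p' = m' →
      (p < p' ↔ m < m') :=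
  restriction_invariance_general q ℓ j k n hk ρs hstages
end
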